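/- arXiv:1911.08443 — 2 statements merged into one kernel-verified Lean document; each statement's English description precedes it below -/
import Mathlib

section
/- There is no pair (x̄₁, x̄₂) ∈ ℝ² such that simultaneously, for each i ∈ {1,2}: x̄ᵢ minimizes over ℝ the function y ↦ ½(y − i)² + ½(y − (½ x̄₁ + ½ x̄₂))², and also x̄ᵢ minimizes over ℝ the function y ↦ ½(y − i)² + ½(y − ((1/3) x̄₁ + (2/3) x̄₂))². Hence the set of persistent equilibria of this time-varying game is empty. -/
/-- Example 2: no strategy profile is simultaneously an equilibrium for both
communication networks `A₁` (rows `(1/2,1/2)`) and `A₂` (rows `(1/3,2/3)`);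
hence the set of persistent equilibria is empty. -/
theorem stmt_3 :
    ¬ ∃ x1 x2 : ℝ,
      ((∀ y : ℝ,
          (1/2) * (x1 - 1)^2 + (1/2) * (x1 - ((1/2) * x1 + (1/2) * x2))^2 ≤
            (1/2) * (y - 1)^2 + (1/2) * (y - ((1/2) * x1 + (1/2) * x2))^2) ∧
       (∀ y : ℝ,
          (1/2) * (x2 - 2)^2 + (1/2) * (x2 - ((1/2) * x1 + (1/2) * x2))^2 ≤
            (1/2) * (y - 2)^2 + (1/2) * (y - ((1/2) * x1 + (1/2) * x2))^2)) ∧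
      ((∀ y : ℝ,
          (1/2) * (x1 - 1)^2 + (1/2) * (x1 - ((1/3) * x1 + (2/3) * x2))^2 ≤
            (1/2) * (y - 1)^2 + (1/2) * (y - ((1/3) * x1 + (2/3) * x2))^2) ∧
       (∀ y : ℝ,
          (1/2) * (x2 - 2)^2 + (1/2) * (x2 - ((1/3) * x1 + (2/3) * x2))^2 ≤
            (1/2) * (y - 2)^2 + (1/2) * (y - ((1/3) * x1 + (2/3) * x2))^2)) := by
  rintro ⟨x1, x2, ⟨h1, h2⟩, h3, h4⟩
  have e1 := h1 ((1 + ((1/2) * x1 + (1/2) * x2)) / 2)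
  have e2 := h2 ((2 + ((1/2) * x1 + (1/2) * x2)) / 2)
  have e3 := h3 ((1 + ((1/3) * x1 + (2/3) * x2)) / 2)
  have e4 := h4 ((2 + ((1/3) * x1 + (2/3) * x2)) / 2)
  nlinarith [sq_nonneg (x1 - (1 + ((1/2) * x1 + (1/2) * x2)) / 2),
    sq_nonneg (x2 - (2 + ((1/2) * x1 + (1/2) * x2)) / 2),
    sq_nonneg (x1 - (1 + ((1/3) * x1 + (2/3) * x2)) / 2),
    sq_nonneg (x2 - (2 + ((1/3) * x1 + (2/3) * x2)) / 2)]
end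

section
/- Let K ∈ ℝ^{n×n} be symmetric positive definite with operator norm ‖K‖, and let S : ℝⁿ → ℝⁿ satisfy, for every fixed point y of S and every x ∈ ℝⁿ, ⟨K(x − S(x)), x − S(x)⟩ ≤ ⟨K(x − S(x)), x − y⟩ (i.e., S belongs to class 𝔗 in the K-weighted inner product). Define W : ℝⁿ → ℝⁿ by W(x) := x − ‖K‖⁻¹ K (x − S(x)). Then the fixed point sets of W and S coincide, and W belongs to class 𝔗 in the standard inner product: for every fixed point y of W and every x ∈ ℝⁿ, ‖x − W(x)‖² ≤ ⟨x − W(x), x − y⟩. -/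
open RealInnerProductSpace

/-- Transfer of the class-𝔗 property from the `K`-weighted inner product to
the standard one: if `S ∈ 𝔗` in `ℋ_K`, then `W := Id − ‖K‖⁻¹K(Id − S)` has the
same fixed points as `S` and belongs to 𝔗 in the standard inner product. -/
theorem stmt_14 (n : ℕ)
    (K : EuclideanSpace ℝ (Fin n) →L[ℝ] EuclideanSpace ℝ (Fin n))
    (hsym : ∀ x y, ⟪K x, y⟫ = ⟪x, K y⟫)
    (hpos : ∀ x, x ≠ 0 → 0 < ⟪K x, x⟫)
    (S : EuclideanSpace ℝ (Fin n) → EuclideanSpace ℝ (Fin n))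
    (hS : ∀ y, S y = y → ∀ x, ⟪K (x - S x), x - S x⟫ ≤ ⟪K (x - S x), x - y⟫) :
    (∀ x, x - ‖K‖⁻¹ • K (x - S x) = x ↔ S x = x) ∧
    (∀ y, y - ‖K‖⁻¹ • K (y - S y) = y → ∀ x,
      ‖x - (x - ‖K‖⁻¹ • K (x - S x))‖^2 ≤
        ⟪x - (x - ‖K‖⁻¹ • K (x - S x)), x - y⟫) := by
  rcases subsingleton_or_nontrivial (EuclideanSpace ℝ (Fin n)) with hsub | hnt
  · constructor
    · intro x
      constructor <;> intro _ <;> exact Subsingleton.elim _ _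
    · intro y _ x
      have h1 : x - (x - ‖K‖⁻¹ • K (x - S x)) = 0 := Subsingleton.elim _ _
      rw [h1, norm_zero, inner_zero_left]
      norm_num
  · obtain ⟨x₀, hx₀⟩ := exists_ne (0 : EuclideanSpace ℝ (Fin n))
    have hKx₀ : K x₀ ≠ 0 := by
      intro h
      have := hpos x₀ hx₀
      rw [h] at this
      simp at this
    have hKn : (0:ℝ) < ‖K‖ := by
      have h1 : 0 < ‖K x₀‖ := norm_pos_iff.mpr hKx₀
      have h2 : ‖K x₀‖ ≤ ‖K‖ * ‖x₀‖ := K.le_opNorm x₀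
      have h3 : 0 < ‖x₀‖ := norm_pos_iff.mpr hx₀
      nlinarith
    have hinj : ∀ u, K u = 0 → u = 0 := by
      intro u hu
      by_contra h
      have := hpos u h
      rw [hu] at this
      simp at this
    have hfix : ∀ x, x - ‖K‖⁻¹ • K (x - S x) = x ↔ S x = x := by
      intro x
      constructor
      · intro h
        have h2 : ‖K‖⁻¹ • K (x - S x) = 0 := sub_eq_self.mp h
        have h3 : K (x - S x) = 0 := by
          rcases smul_eq_zero.mp h2 with h4 | h4
          · exact absurd h4 (by positivity)
          · exact h4
        have h5 := sub_eq_zero.mp (hinj _ h3)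
        exact h5.symm
      · intro h
        rw [show x - S x = 0 from sub_eq_zero.mpr h.symm]
        simp
    refine ⟨hfix, ?_⟩
    intro y hy x
    have hSy : S y = y := (hfix y).mp hy
    have hS' := hS y hSy x
    set u := x - S x with hu
    clear_value u
    -- key inequality: ‖K u‖² ≤ ‖K‖ * ⟪K u, u⟫
    have key : ‖K u‖^2 ≤ ‖K‖ * ⟪K u, u⟫ := by
      by_cases hKu : K u = 0
      · simp [hKu]
      · have hc : (0:ℝ) < ⟪K (K u), K u⟫ := hpos _ hKu
        set a : ℝ := ⟪K u, u⟫ with ha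
        set b : ℝ := ⟪K u, K u⟫ with hb
        set c : ℝ := ⟪K (K u), K u⟫ with hcdef
        set t : ℝ := b / c with ht
        have h0 : 0 ≤ ⟪K (u - t • K u), u - t • K u⟫ := by
          by_cases hz : u - t • K u = 0
          · simp [hz]
          · exact (hpos _ hz).le
        have hsym2 : ⟪K (K u), u⟫ = b := by
          rw [hb, hsym (K u) u, real_inner_comm]
        have hexp : ⟪K (u - t • K u), u - t • K u⟫
            = a - 2 * t * b + t^2 * c := by
          simp only [map_sub, map_smul, inner_sub_left, inner_sub_right,
            real_inner_smul_left, real_inner_smul_right, hsym2, ← ha, ← hb, ← hcdef]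
          ring
        rw [hexp] at h0
        have hc' : c ≠ 0 := ne_of_gt hc
        have hcs : b^2 ≤ a * c := by
          have hmul : 0 ≤ (a - 2 * t * b + t^2 * c) * c := mul_nonneg h0 hc.le
          have hexp2 : (a - 2 * t * b + t^2 * c) * c = a * c - b^2 := by
            rw [ht]
            field_simp
            ring
          nlinarith [hmul, hexp2]
        have hbnd : c ≤ ‖K‖ * ‖K u‖^2 := by
          have h1 : ⟪K (K u), K u⟫ ≤ ‖K (K u)‖ * ‖K u‖ := real_inner_le_norm _ _
          have h2 : ‖K (K u)‖ ≤ ‖K‖ * ‖K u‖ := K.le_opNorm _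
          have h3 : (0:ℝ) ≤ ‖K u‖ := norm_nonneg _
          calc c ≤ ‖K (K u)‖ * ‖K u‖ := h1
            _ ≤ (‖K‖ * ‖K u‖) * ‖K u‖ := by nlinarith
            _ = ‖K‖ * ‖K u‖^2 := by ring
        have hbeq : b = ‖K u‖^2 := real_inner_self_eq_norm_sq _
        have hKun : (0:ℝ) < ‖K u‖ := norm_pos_iff.mpr hKu
        have hKuu : 0 ≤ a := by
          by_cases hz : u = 0
          · simp [ha, hz]
          · exact (hpos u hz).le
        have hN : (0:ℝ) < ‖K u‖^2 := by positivity
        have h4 : (‖K u‖^2)^2 ≤ a * (‖K‖ * ‖K u‖^2) :=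
          le_trans (hbeq ▸ hcs) (mul_le_mul_of_nonneg_left hbnd hKuu)
        have h5 : ‖K u‖^2 * ‖K u‖^2 ≤ (‖K‖ * a) * ‖K u‖^2 := by
          calc ‖K u‖^2 * ‖K u‖^2 = (‖K u‖^2)^2 := by ring
            _ ≤ a * (‖K‖ * ‖K u‖^2) := h4
            _ = (‖K‖ * a) * ‖K u‖^2 := by ring
        exact le_of_mul_le_mul_right h5 hN
    have hsimp : x - (x - ‖K‖⁻¹ • K u) = ‖K‖⁻¹ • K u := by abel
    rw [hsimp]
    have hKinv : (0:ℝ) < ‖K‖⁻¹ := inv_pos.mpr hKn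
    have hnorm : ‖‖K‖⁻¹ • K u‖^2 = ‖K‖⁻¹^2 * ‖K u‖^2 := by
      rw [norm_smul, mul_pow]
      congr 1
      rw [Real.norm_eq_abs, sq_abs]
    rw [hnorm, real_inner_smul_left]
    have h1 : ‖K‖⁻¹ * ⟪K u, u⟫ ≤ ‖K‖⁻¹ * ⟪K u, x - y⟫ :=
      mul_le_mul_of_nonneg_left hS' hKinv.le
    have h2 : ‖K‖⁻¹^2 * ‖K u‖^2 ≤ ‖K‖⁻¹ * ⟪K u, u⟫ := by
      have h3 := mul_le_mul_of_nonneg_left key (mul_pos hKinv hKinv).le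
      calc ‖K‖⁻¹^2 * ‖K u‖^2 = ‖K‖⁻¹ * ‖K‖⁻¹ * ‖K u‖^2 := by ring
        _ ≤ ‖K‖⁻¹ * ‖K‖⁻¹ * (‖K‖ * ⟪K u, u⟫) := h3
        _ = (‖K‖⁻¹ * ‖K‖) * (‖K‖⁻¹ * ⟪K u, u⟫) := by ring
        _ = ‖K‖⁻¹ * ⟪K u, u⟫ := by rw [inv_mul_cancel₀ (ne_of_gt hKn)]; ring
    linarith
end
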